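/- arXiv:2409.08682 — 10 statements merged into one kernel-verified Lean document; each statement's English description precedes it below -/
import Mathlib

section
/- Let G be an abelian ℓ-group and u ∈ G with 0 ≤ u. For all x, y ∈ G with 0 ≤ x ≤ u and 0 ≤ y ≤ u, the truncated MV term ¬(¬x ⊕ y) ⊕ y equals x ⊔ y; explicitly, ((u − ((u − x + y) ⊓ u)) + y) ⊓ u = x ⊔ y. -/
/-- In the Mundici interval `Γ(G,u)` of an abelian ℓ-group `G`, the MV term
`¬(¬x ⊕ y) ⊕ y` equals `x ⊔ y`. -/
theorem stmt_1 {G : Type*} [Lattice G] [AddCommGroup G]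
    [CovariantClass G G (· + ·) (· ≤ ·)]
    (u : G) (hu : 0 ≤ u) (x y : G)
    (hx0 : 0 ≤ x) (hxu : x ≤ u) (hy0 : 0 ≤ y) (hyu : y ≤ u) :
    ((u - ((u - x + y) ⊓ u)) + y) ⊓ u = x ⊔ y := by
  have h1 : u - ((u - x + y) ⊓ u) = (x - y) ⊔ 0 := by
    rw [sub_inf, sub_self]
    congr 1
    abel
  rw [h1]
  have h2 : ((x - y) ⊔ 0) + y = x ⊔ y := by
    rw [sup_add, sub_add_cancel, zero_add]
  rw [h2, inf_eq_left]
  exact sup_le hxu hyu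
end

section
/- Let F be an additively idempotent semifield with canonical order a ≤ b iff a + b = b, and let a, b be nonzero elements of F. Then m := (a⁻¹ + b⁻¹)⁻¹ is the greatest lower bound of a and b: m + a = a, m + b = b, and for every c ∈ F with c + a = a and c + b = b one has c + m = m. Hence the nonzero elements of F form a lattice-ordered abelian group under multiplication, with join a + b and meet (a⁻¹ + b⁻¹)⁻¹. -/
/-!
Inversion reverses the canonical order on nonzero elements: multiplying `x + y = y` by
`x⁻¹ y⁻¹` gives `y⁻¹ + x⁻¹ = x⁻¹`. Since `a⁻¹ + b⁻¹` is the join of `a⁻¹` and `b⁻¹`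
(and is nonzero, as idempotency forbids nontrivial sums equal to `0`), its inverse is the meet
of `a` and `b`.
-/

theorem eq_zero_of_add_eq_zero_of_add_idem {M : Type*} [AddMonoid M]
    (hidem : ∀ a : M, a + a = a) {x y : M} (h : x + y = 0) : x = 0 := by
  calc x = x + (x + y) := by rw [h, add_zero]
    _ = x + y := by rw [← add_assoc, hidem]
    _ = 0 := h

theorem add_add_self_left_of_add_idem {M : Type*} [AddSemigroup M]
    (hidem : ∀ a : M, a + a = a) (x y : M) : x + (x + y) = x + y := by
  rw [← add_assoc, hidem]

theorem add_add_eq_right_of_add_eq_right {M : Type*} [AddSemigroup M] {x y z : M}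
    (hx : x + z = z) (hy : y + z = z) : x + y + z = z := by
  rw [add_assoc, hy, hx]

theorem inv_add_inv_eq_of_add_eq_right {F : Type*} [Semifield F] {x y : F}
    (hx : x ≠ 0) (hy : y ≠ 0) (h : x + y = y) : y⁻¹ + x⁻¹ = x⁻¹ :=
  calc y⁻¹ + x⁻¹ = (x + y) * (x⁻¹ * y⁻¹) := by field_simp
    _ = x⁻¹ := by rw [h, mul_left_comm, mul_inv_cancel₀ hy, mul_one]

/-- In an additively idempotent semifield with canonical order `a ≤ b ↔ a + b = b`,
for nonzero `a, b` the element `m = (a⁻¹ + b⁻¹)⁻¹` is the greatest lower bound of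
`a` and `b`: the nonzero elements form an abelian ℓ-group under multiplication
with join `a + b` and meet `(a⁻¹ + b⁻¹)⁻¹`. -/
theorem stmt_8 {F : Type*} [Semifield F] (hidem : ∀ a : F, a + a = a)
    (a b : F) (ha : a ≠ 0) (hb : b ≠ 0) :
    (a⁻¹ + b⁻¹)⁻¹ + a = a ∧ (a⁻¹ + b⁻¹)⁻¹ + b = b ∧
    ∀ c : F, c + a = a → c + b = b → c + (a⁻¹ + b⁻¹)⁻¹ = (a⁻¹ + b⁻¹)⁻¹ := by
  have hs : a⁻¹ + b⁻¹ ≠ 0 := fun h =>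
    inv_ne_zero ha (eq_zero_of_add_eq_zero_of_add_idem hidem h)
  have ha_le : a⁻¹ + (a⁻¹ + b⁻¹) = a⁻¹ + b⁻¹ := add_add_self_left_of_add_idem hidem _ _
  have hb_le : b⁻¹ + (a⁻¹ + b⁻¹) = a⁻¹ + b⁻¹ := by
    rw [add_comm a⁻¹, add_add_self_left_of_add_idem hidem]
  refine ⟨?_, ?_, fun c hca hcb => ?_⟩
  · simpa using inv_add_inv_eq_of_add_eq_right (inv_ne_zero ha) hs ha_le
  · simpa using inv_add_inv_eq_of_add_eq_right (inv_ne_zero hb) hs hb_le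
  rcases eq_or_ne c 0 with rfl | hc
  · exact zero_add _
  have hs_le : a⁻¹ + b⁻¹ + c⁻¹ = c⁻¹ := add_add_eq_right_of_add_eq_right
    (inv_add_inv_eq_of_add_eq_right hc ha hca) (inv_add_inv_eq_of_add_eq_right hc hb hcb)
  simpa using inv_add_inv_eq_of_add_eq_right hs (inv_ne_zero hc) hs_le
end

section
/- Let G be a linearly ordered additive commutative group, let ℤ ×ₗ G be the lexicographic product, and u = (1, 0). For every x with 0 ≤ x ≤ u, the characteristic identity of the variety V(C) holds: (x ⊕ x) ⊙ (x ⊕ x) = (x ⊙ x) ⊕ (x ⊙ x), where x ⊕ y = (x + y) ⊓ u and x ⊙ y = (x + y − u) ⊔ 0. That is, the perfect MV-algebra Δ(G) satisfies (2x)² = 2(x²). -/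
/-!
An element `x` of `[0, u]` in `ℤ ×ₗ G` has first coordinate `0` or `1`. In the first case
every multiple of `x` lies below `u`, in the second every multiple of `u - x` does. In any
lattice-ordered group, `4 • x ≤ u` already forces both sides of `(2x)² = 2(x²)` to be `0`,
and `4 • (u - x) ≤ u` forces both to be `u`.
-/

section LatticeOrderedGroup

variable {α : Type*} [AddCommGroup α] [Lattice α] [IsOrderedAddMonoid α] {u x : α}

lemma chang_identity_of_four_nsmul_le (hx : 0 ≤ x) (hxu : 4 • x ≤ u) :
    ((x + x) ⊓ u + (x + x) ⊓ u - u) ⊔ 0 = ((x + x - u) ⊔ 0 + (x + x - u) ⊔ 0) ⊓ u := by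
  have hxx : x + x ≤ u := by
    rw [← two_nsmul]; exact (nsmul_le_nsmul_left hx (by norm_num)).trans hxu
  have h4x : x + x + (x + x) ≤ u := by
    convert hxu using 1; abel
  have hu : 0 ≤ u := (nsmul_nonneg hx 4).trans hxu
  rw [inf_eq_left.mpr hxx, sup_eq_right.mpr (sub_nonpos.mpr h4x),
    sup_eq_right.mpr (sub_nonpos.mpr hxx), add_zero, inf_eq_left.mpr hu]

lemma chang_identity_of_four_nsmul_sub_le (hxu : x ≤ u) (hux : 4 • (u - x) ≤ u) :
    ((x + x) ⊓ u + (x + x) ⊓ u - u) ⊔ 0 = ((x + x - u) ⊔ 0 + (x + x - u) ⊔ 0) ⊓ u := by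
  have hy : 0 ≤ u - x := sub_nonneg.mpr hxu
  have huxx : u ≤ x + x := by
    have h2 : 2 • (u - x) ≤ u := (nsmul_le_nsmul_left hy (by norm_num)).trans hux
    rw [← sub_nonneg] at h2 ⊢
    convert h2 using 1; abel
  have hu4x : u ≤ x + x - u + (x + x - u) := by
    rw [← sub_nonneg] at hux ⊢
    convert hux using 1; abel
  have hu : 0 ≤ u := (nsmul_nonneg hy 4).trans hux
  rw [inf_eq_right.mpr huxx, add_sub_cancel_right, sup_eq_left.mpr hu,
    sup_eq_left.mpr (sub_nonneg.mpr huxx), inf_eq_right.mpr hu4x]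

end LatticeOrderedGroup

namespace Prod.Lex

lemma nsmul_lt_toLex_one_zero_of_fst_eq_zero {G : Type*} [AddMonoid G] [LT G] {x : ℤ ×ₗ G}
    (hx : (ofLex x).1 = 0) (n : ℕ) : n • x < toLex (1, 0) :=
  lt_iff.mpr <| Or.inl <| by
    change (n • ofLex x).1 < 1
    rw [Prod.smul_fst, hx, smul_zero]; exact one_pos

lemma fst_eq_zero_or_eq_one_of_nonneg_of_le_toLex_one_zero {G : Type*} [Zero G] [LE G]
    {x : ℤ ×ₗ G} (hx0 : 0 ≤ x) (hxu : x ≤ toLex (1, 0)) :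
    (ofLex x).1 = 0 ∨ (ofLex x).1 = 1 := by
  have h0 := monotone_fst _ _ hx0
  have h1 := monotone_fst _ _ hxu
  simp only [ofLex_zero, Prod.fst_zero, ofLex_toLex] at h0 h1
  omega

end Prod.Lex

/-- The perfect MV-algebra `Δ(G) = Γ(ℤ ×ₗ G, (1,0))` satisfies the identity
`(2x)² = 2(x²)` axiomatizing the variety `V(C)` generated by Chang's
MV-algebra. -/
theorem stmt_9 {G : Type*} [AddCommGroup G] [LinearOrder G] [IsOrderedAddMonoid G]
    (u : ℤ ×ₗ G) (hu : u = toLex (1, 0)) (x : ℤ ×ₗ G) (hx0 : 0 ≤ x) (hxu : x ≤ u) :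
    (((x + x) ⊓ u) + ((x + x) ⊓ u) - u) ⊔ 0 =
      (((x + x - u) ⊔ 0) + ((x + x - u) ⊔ 0)) ⊓ u := by
  subst hu
  rcases Prod.Lex.fst_eq_zero_or_eq_one_of_nonneg_of_le_toLex_one_zero hx0 hxu with hx | hx
  · exact chang_identity_of_four_nsmul_le hx0
      (Prod.Lex.nsmul_lt_toLex_one_zero_of_fst_eq_zero hx 4).le
  · have hux : (ofLex (toLex ((1 : ℤ), (0 : G)) - x)).1 = 0 := by simp [hx]
    exact chang_identity_of_four_nsmul_sub_le hxu
      (Prod.Lex.nsmul_lt_toLex_one_zero_of_fst_eq_zero hux 4).le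
end

section
/- Let G be a linearly ordered additive commutative group, ℤ ×ₗ G the lexicographic product, and u = (1, 0). For every x with 0 ≤ x ≤ u, writing x² = (x + x − u) ⊔ 0 and 2(x²) = (x² + x²) ⊓ u, one has 2(x²) ≤ x if and only if the first coordinate of x is 0 or x = u. That is, θ(Δ(G)) = Rad(Δ(G)) ∪ {1}: the invariant θ of the perfect MV-algebra Δ(G) consists exactly of its infinitesimals together with the top element. -/
/-!
Write `x = (a, g)` with `0 ≤ a ≤ 1`. If `a = 0` then `x + x < u`, so `x² = 0` and
`2(x²) = 0 ≤ x`. If `a = 1` then `x² = x + x - u` has first coordinate `1`, so `x² + x² > u`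
and `2(x²) = u`, which lies below `x ≤ u` only when `x = u`.
-/

section LatticeOrderedGroup

variable {A : Type*} [AddCommGroup A] [Lattice A] [IsOrderedAddMonoid A]

-- `x ⊙ x` and `y ⊕ y` in the MV-algebra `Γ(A, u)` on the interval `[0, u]`.
def mvSq (u x : A) : A := (x + x - u) ⊔ 0

def mvDouble (u y : A) : A := (y + y) ⊓ u

variable {u x : A}

theorem mvSq_eq_zero_of_add_self_le (h : x + x ≤ u) : mvSq u x = 0 :=
  sup_eq_right.2 (sub_nonpos.2 h)

theorem mvDouble_mvSq_le_of_add_self_le (hx0 : 0 ≤ x) (h : x + x ≤ u) :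
    mvDouble u (mvSq u x) ≤ x := by
  rw [mvDouble, mvSq_eq_zero_of_add_self_le h, add_zero]
  exact inf_le_left.trans hx0

theorem mvDouble_mvSq_eq_of_le (h : u ≤ (x + x - u) + (x + x - u)) :
    mvDouble u (mvSq u x) = u :=
  inf_eq_right.2 (h.trans (add_le_add le_sup_left le_sup_left))

theorem mvDouble_mvSq_le_iff_of_le (hxu : x ≤ u) (h : u ≤ (x + x - u) + (x + x - u)) :
    mvDouble u (mvSq u x) ≤ x ↔ x = u := by
  rw [mvDouble_mvSq_eq_of_le h]
  exact ⟨hxu.antisymm, Eq.ge⟩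

end LatticeOrderedGroup

section IntLex

theorem Prod.Lex.fst_eq_zero_or_one {G : Type*} [Zero G] [LE G] {x : ℤ ×ₗ G} (hx0 : 0 ≤ x)
    (hxu : x ≤ toLex (1, 0)) :
    (ofLex x).1 = 0 ∨ (ofLex x).1 = 1 := by
  have h0 := Prod.Lex.monotone_fst _ _ hx0
  have h1 := Prod.Lex.monotone_fst _ _ hxu
  simp only [ofLex_zero, Prod.fst_zero, ofLex_toLex] at h0 h1
  omega

variable {G : Type*} [AddCommGroup G] [LT G] {x : ℤ ×ₗ G}

theorem Prod.Lex.add_self_lt_of_fst_eq_zero (h : (ofLex x).1 = 0) :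
    x + x < toLex (1, 0) :=
  Prod.Lex.lt_iff.2 <| .inl <| by simp [h]

theorem Prod.Lex.lt_of_fst_eq_one (h : (ofLex x).1 = 1) :
    toLex (1, 0) < (x + x - toLex (1, 0)) + (x + x - toLex (1, 0)) :=
  Prod.Lex.lt_iff.2 <| .inl <| by simp [h]

end IntLex

/-- In the perfect MV-algebra `Δ(G) = Γ(ℤ ×ₗ G, (1,0))`, an element `x`
satisfies `2(x²) ≤ x` iff its first coordinate is `0` or `x = u`; that is,
`θ(Δ(G)) = Rad(Δ(G)) ∪ {1}`. -/
theorem stmt_10 {G : Type*} [AddCommGroup G] [LinearOrder G] [IsOrderedAddMonoid G]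
    (u : ℤ ×ₗ G) (hu : u = toLex (1, 0)) (x : ℤ ×ₗ G) (hx0 : 0 ≤ x) (hxu : x ≤ u) :
    ((((x + x - u) ⊔ 0) + ((x + x - u) ⊔ 0)) ⊓ u ≤ x) ↔
       ((ofLex x).1 = 0 ∨ x = u) := by
  subst hu
  change mvDouble _ (mvSq _ x) ≤ x ↔ _
  rcases Prod.Lex.fst_eq_zero_or_one hx0 hxu with h0 | h1
  · simpa [h0] using
      mvDouble_mvSq_le_of_add_self_le hx0 (Prod.Lex.add_self_lt_of_fst_eq_zero h0).le
  · simpa [h1] using mvDouble_mvSq_le_iff_of_le hxu (Prod.Lex.lt_of_fst_eq_one h1).le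
end

section
/- Let G be a linearly ordered additive commutative group, ℤ ×ₗ G the lexicographic product, and u = (1, 0). For every x with 0 ≤ x ≤ u, writing D(y) = (((y + y − u) ⊔ 0) + ((y + y − u) ⊔ 0)) ⊓ u (that is, D(y) = 2(y²)), one has x ≤ D(x) if and only if D(u − x) ≤ u − x. That is, in the algebra Δ(G) ∈ V(C), x ∈ θ* if and only if ¬x ∈ θ. -/
/-!
Split according to whether `2x ≤ u`. If so, `2(x²) = 0`, so `x ∈ θ*` only for `x = 0`, while
`2((¬x)²) = 2(u - 2x) ⊓ u` lies below `u - x` only if `x = 0` or `u ≤ 3x`. If `u ≤ 2x`, then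
`2((¬x)²) = 0 ≤ ¬x`, while `x ≤ 2(x²)` amounts to `2u ≤ 3x`. In `ℤ ×ₗ G` the first coordinate of
`x` is `0` in the first case and `1` in the second, which rules out `u ≤ 3x` and forces `2u < 3x`.
-/

section TwoSq

variable {α : Type*} [AddCommGroup α] [LinearOrder α] [IsOrderedAddMonoid α]

def twoSq (u y : α) : α := (((y + y - u) ⊔ 0) + ((y + y - u) ⊔ 0)) ⊓ u

variable {u y : α}

lemma twoSq_of_add_le (hu : 0 ≤ u) (h : y + y ≤ u) : twoSq u y = 0 := by
  rw [twoSq, sup_eq_right.mpr (sub_nonpos.mpr h), add_zero, inf_eq_left.mpr hu]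

lemma twoSq_of_le_add (h : u ≤ y + y) : twoSq u y = (y + y - u + (y + y - u)) ⊓ u := by
  rw [twoSq, sup_eq_left.mpr (sub_nonneg.mpr h)]

theorem le_twoSq_iff_twoSq_sub_le {x : α} (hx0 : 0 ≤ x) (hxu : x ≤ u)
    (hsmall : x + x ≤ u → x + x + x < u) (hlarge : u ≤ x + x → u + u ≤ x + x + x) :
    x ≤ twoSq u x ↔ twoSq u (u - x) ≤ u - x := by
  have hu : 0 ≤ u := hx0.trans hxu
  have hneg : u - x + (u - x) = u + (u - (x + x)) := by abel
  rcases le_total (x + x) u with h | h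
  · have hsq : twoSq u (u - x) = (u - (x + x) + (u - (x + x))) ⊓ u := by
      rw [twoSq_of_le_add (by rw [hneg]; exact le_add_of_nonneg_right (sub_nonneg.mpr h)),
        hneg, add_sub_cancel_left]
    rw [twoSq_of_add_le hu h, hsq, inf_le_iff, le_sub_self_iff]
    refine ⟨Or.inr, fun h' ↦ h'.resolve_left fun h3 ↦ (hsmall h).not_ge ?_⟩
    rw [← sub_nonneg] at h3 ⊢
    convert h3 using 1
    abel
  · have hsq : twoSq u (u - x) = 0 := by
      refine twoSq_of_add_le hu ?_
      rw [hneg]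
      exact add_le_of_nonpos_right (sub_nonpos.mpr h)
    rw [twoSq_of_le_add h, hsq, le_inf_iff, sub_nonneg]
    refine iff_of_true ⟨?_, hxu⟩ hxu
    rw [← sub_nonneg]
    convert sub_nonneg.mpr (hlarge h) using 1
    abel

end TwoSq

section Lex

variable {G : Type*} [AddZeroClass G] [Preorder G]

lemma lex_add_add_lt_of_add_le_one {x : ℤ ×ₗ G} (hx0 : 0 ≤ x) (h : x + x ≤ toLex (1, 0)) :
    x + x + x < toLex (1, 0) := by
  have h0 := Prod.Lex.monotone_fst _ _ hx0
  have h2 := Prod.Lex.monotone_fst _ _ h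
  refine Prod.Lex.lt_iff.mpr (Or.inl ?_)
  simp only [ofLex_add, Prod.fst_add, ofLex_toLex, ofLex_zero, Prod.fst_zero] at h0 h2 ⊢
  omega

lemma lex_one_add_one_lt_add_add {x : ℤ ×ₗ G} (hxu : x ≤ toLex (1, 0))
    (h : toLex (1, 0) ≤ x + x) :
    toLex (1, 0) + toLex (1, 0) < x + x + x := by
  have h1 := Prod.Lex.monotone_fst _ _ hxu
  have h2 := Prod.Lex.monotone_fst _ _ h
  refine Prod.Lex.lt_iff.mpr (Or.inl ?_)
  simp only [ofLex_add, Prod.fst_add, ofLex_toLex] at h1 h2 ⊢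
  omega

end Lex

/-- In the algebra `Δ(G) = Γ(ℤ ×ₗ G, (1,0)) ∈ V(C)`, writing `D(y) = 2(y²)`,
one has `x ∈ θ*` iff `¬x ∈ θ`. -/
theorem stmt_11 {G : Type*} [AddCommGroup G] [LinearOrder G] [IsOrderedAddMonoid G]
    (u : ℤ ×ₗ G) (hu : u = toLex (1, 0))
    (D : ℤ ×ₗ G → ℤ ×ₗ G)
    (hD : ∀ y, D y = (((y + y - u) ⊔ 0) + ((y + y - u) ⊔ 0)) ⊓ u)
    (x : ℤ ×ₗ G) (hx0 : 0 ≤ x) (hxu : x ≤ u) :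
    x ≤ D x ↔ D (u - x) ≤ u - x := by
  obtain rfl : D = twoSq u := funext hD
  subst hu
  exact le_twoSq_iff_twoSq_sub_le hx0 hxu (lex_add_add_lt_of_add_le_one hx0)
    (fun h ↦ (lex_one_add_one_lt_add_add hxu h).le)
end

section
/- Let G be a linearly ordered additive commutative group, ℤ ×ₗ G the lexicographic product, and u = (1, 0). Every x with 0 ≤ x ≤ u is either infinitesimal or the negation of an infinitesimal: either (n • x) ⊓ u ≤ u − x for all natural numbers n, or (n • (u − x)) ⊓ u ≤ x for all natural numbers n. That is, Δ(G) is a perfect MV-algebra: it is the disjoint union of its radical and its co-radical. -/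
/-!
The first coordinate of an element of `[0, u]` is `0` or `1`. If `x = (0, g)` then every
multiple `n • x` still has first coordinate `0`, so it lies strictly below `u - x`, whose first
coordinate is `1`; if `x = (1, g)` the same holds with the roles of `x` and `u - x` exchanged.
-/

namespace Prod.Lex

variable {α β : Type*}

theorem lt_of_fst_lt [Preorder α] [Preorder β] {a b : α ×ₗ β} (h : (ofLex a).1 < (ofLex b).1) :
    a < b :=
  lt_iff.2 (Or.inl h)

theorem fst_ofLex_nsmul [AddMonoid α] [AddMonoid β] (n : ℕ) (a : α ×ₗ β) :
    (ofLex (n • a)).1 = n • (ofLex a).1 :=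
  rfl

theorem nsmul_lt_of_fst_eq_zero [AddMonoid α] [Preorder α] [AddMonoid β] [Preorder β]
    {a b : α ×ₗ β} (ha : (ofLex a).1 = 0) (hb : 0 < (ofLex b).1) (n : ℕ) : n • a < b :=
  lt_of_fst_lt (by rwa [fst_ofLex_nsmul, ha, nsmul_zero])

end Prod.Lex

theorem stmt_13_general {G : Type*} [AddCommGroup G] [LinearOrder G]
    (u : ℤ ×ₗ G) (hu : u = toLex (1, 0)) (x : ℤ ×ₗ G) (hx0 : 0 ≤ x) (hxu : x ≤ u) :
    (∀ n : ℕ, (n • x) ⊓ u ≤ u - x) ∨ (∀ n : ℕ, (n • (u - x)) ⊓ u ≤ x) := by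
  subst hu
  have hx_nonneg : 0 ≤ (ofLex x).1 := Prod.Lex.monotone_fst _ _ hx0
  have hx_le_one : (ofLex x).1 ≤ 1 := Prod.Lex.monotone_fst _ _ hxu
  have hsub : (ofLex (toLex (1, 0) - x)).1 = 1 - (ofLex x).1 := rfl
  obtain hx | hx : (ofLex x).1 = 0 ∨ (ofLex x).1 = 1 := by omega
  · exact .inl fun n ↦ inf_le_left.trans (Prod.Lex.nsmul_lt_of_fst_eq_zero hx (by omega) n).le
  · exact .inr fun n ↦
      inf_le_left.trans (Prod.Lex.nsmul_lt_of_fst_eq_zero (by omega) (by omega) n).le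

/-- Every element of `Δ(G) = Γ(ℤ ×ₗ G, (1,0))` is either an infinitesimal or
the negation of an infinitesimal: `Δ(G)` is a perfect MV-algebra, the disjoint
union of its radical and its co-radical. -/
theorem stmt_13 {G : Type*} [AddCommGroup G] [LinearOrder G] [IsOrderedAddMonoid G]
    (u : ℤ ×ₗ G) (hu : u = toLex (1, 0)) (x : ℤ ×ₗ G) (hx0 : 0 ≤ x) (hxu : x ≤ u) :
    (∀ n : ℕ, (n • x) ⊓ u ≤ u - x) ∨ (∀ n : ℕ, (n • (u - x)) ⊓ u ≤ x) :=
  stmt_13_general u hu x hx0 hxu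
end

section
/- Let G be a linearly ordered additive commutative group, ℤ ×ₗ G the lexicographic product, and u = (1, 0). Write D(y) = (((y + y − u) ⊔ 0) + ((y + y − u) ⊔ 0)) ⊓ u, i.e., D(y) = 2(y²). If 0 ≤ x, y ≤ u satisfy D(x) ≤ x and D(y) ≤ y, then the elements x ⊕ y = (x + y) ⊓ u, x ⊙ y = (x + y − u) ⊔ 0, x ⊓ y, and x ⊔ y all satisfy the same inequality (D(z) ≤ z). That is, θ(Δ(G)) is closed under ⊕, ⊙, ∧, ∨. -/
/-! In `Δ(G)` an element `z` of `[0, u]` either has first coordinate `0` (it is infinitesimal) or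
first coordinate `1`. An infinitesimal `z` satisfies `z + z ≤ u`, so `z² = 0` and `D(z) = 0 ≤ z`.
If the first coordinate is `1`, then `2(2z − u) ≥ u`, so `D(z) = u` and `D(z) ≤ z` forces `z = u`.
Thus `θ(Δ(G))` consists of the infinitesimals together with `u`, and this set is closed under the
four operations: infinitesimals are closed under `+`, `u ⊕ y = u`, `u ⊙ y = y`, and `⊓`, `⊔` return
one of their arguments. -/

section LatticeOrderedGroup

variable {A : Type*} [AddCommGroup A] [Lattice A]

/-- `2(y ⊙ y)` in the MV-algebra `Γ(A, u)`, where `x ⊙ y = (x + y − u) ⊔ 0` and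
`x ⊕ y = (x + y) ⊓ u`. -/
def twiceSq (u y : A) : A :=
  (((y + y - u) ⊔ 0) + ((y + y - u) ⊔ 0)) ⊓ u

theorem twiceSq_le (u z : A) : twiceSq u z ≤ u :=
  inf_le_right

variable [IsOrderedAddMonoid A]

theorem twiceSq_le_self_of_add_le {u z : A} (hz : 0 ≤ z) (h : z + z ≤ u) : twiceSq u z ≤ z := by
  rw [twiceSq, sup_eq_right.2 (sub_nonpos.2 h), add_zero]
  exact inf_le_left.trans hz

theorem eq_of_twiceSq_le_self {u z : A} (hzu : z ≤ u)
    (h : u ≤ (z + z - u) + (z + z - u)) (hz : twiceSq u z ≤ z) : z = u := by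
  have hu : u ≤ ((z + z - u) ⊔ 0) + ((z + z - u) ⊔ 0) :=
    h.trans (add_le_add le_sup_left le_sup_left)
  rw [twiceSq, inf_eq_right.2 hu] at hz
  exact le_antisymm hzu hz

end LatticeOrderedGroup

theorem lex_le_of_fst_lt {α β : Type*} [LT α] [LE β] {a b : α ×ₗ β}
    (h : (ofLex a).1 < (ofLex b).1) : a ≤ b :=
  Prod.Lex.le_iff.2 (Or.inl h)

section LexInt

variable {G : Type*} [AddCommGroup G] [LinearOrder G]

theorem le_toLex_one_zero_of_fst_nonpos {z : ℤ ×ₗ G} (h : (ofLex z).1 ≤ 0) :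
    z ≤ toLex (1, 0) :=
  lex_le_of_fst_lt (by simp only [ofLex_toLex]; omega)

variable [IsOrderedAddMonoid G]

theorem twiceSq_le_self_of_fst_nonpos {z : ℤ ×ₗ G} (hz : 0 ≤ z) (h : (ofLex z).1 ≤ 0) :
    twiceSq (toLex (1, 0)) z ≤ z :=
  twiceSq_le_self_of_add_le hz
    (le_toLex_one_zero_of_fst_nonpos (by simp only [ofLex_add, Prod.fst_add]; omega))

theorem fst_nonpos_or_eq_of_twiceSq_le_self {z : ℤ ×ₗ G} (hzu : z ≤ toLex (1, 0))
    (hz : twiceSq (toLex (1, 0)) z ≤ z) : (ofLex z).1 ≤ 0 ∨ z = toLex (1, 0) := by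
  refine (le_or_gt (ofLex z).1 0).imp_right fun hpos => eq_of_twiceSq_le_self hzu ?_ hz
  exact lex_le_of_fst_lt
    (by simp only [ofLex_add, ofLex_sub, ofLex_toLex, Prod.fst_add, Prod.fst_sub]; omega)

theorem twiceSq_oplus_odot_le_self {x y : ℤ ×ₗ G} (hx0 : 0 ≤ x) (hxu : x ≤ toLex (1, 0))
    (hy0 : 0 ≤ y) (hyu : y ≤ toLex (1, 0))
    (hx : twiceSq (toLex (1, 0)) x ≤ x) (hy : twiceSq (toLex (1, 0)) y ≤ y) :
    twiceSq (toLex (1, 0)) ((x + y) ⊓ toLex (1, 0)) ≤ (x + y) ⊓ toLex (1, 0) ∧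
    twiceSq (toLex (1, 0)) ((x + y - toLex (1, 0)) ⊔ 0) ≤ (x + y - toLex (1, 0)) ⊔ 0 := by
  rcases fst_nonpos_or_eq_of_twiceSq_le_self hxu hx with hx1 | rfl
  · rcases fst_nonpos_or_eq_of_twiceSq_le_self hyu hy with hy1 | rfl
    · have hxy1 : (ofLex (x + y)).1 ≤ 0 := by simp only [ofLex_add, Prod.fst_add]; omega
      have hxy := le_toLex_one_zero_of_fst_nonpos hxy1
      rw [inf_eq_left.2 hxy, sup_eq_right.2 (sub_nonpos.2 hxy)]
      exact ⟨twiceSq_le_self_of_fst_nonpos (add_nonneg hx0 hy0) hxy1,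
        twiceSq_le_self_of_fst_nonpos le_rfl le_rfl⟩
    · rw [inf_eq_right.2 (le_add_of_nonneg_left hx0), add_sub_cancel_right,
        sup_eq_left.2 hx0]
      exact ⟨twiceSq_le _ _, hx⟩
  · rw [inf_eq_right.2 (le_add_of_nonneg_right hy0), add_sub_cancel_left, sup_eq_left.2 hy0]
    exact ⟨twiceSq_le _ _, hy⟩

end LexInt

/-- In `Δ(G) = Γ(ℤ ×ₗ G, (1,0)) ∈ V(C)`, writing `D(y) = 2(y²)`, the set
`θ(Δ(G)) = {x : D(x) ≤ x}` is closed under `⊕`, `⊙`, `∧`, `∨`. -/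
theorem stmt_14 {G : Type*} [AddCommGroup G] [LinearOrder G] [IsOrderedAddMonoid G]
    (u : ℤ ×ₗ G) (hu : u = toLex (1, 0))
    (D : ℤ ×ₗ G → ℤ ×ₗ G)
    (hD : ∀ y, D y = (((y + y - u) ⊔ 0) + ((y + y - u) ⊔ 0)) ⊓ u)
    (x y : ℤ ×ₗ G) (hx0 : 0 ≤ x) (hxu : x ≤ u) (hy0 : 0 ≤ y) (hyu : y ≤ u)
    (hx : D x ≤ x) (hy : D y ≤ y) :
    D ((x + y) ⊓ u) ≤ (x + y) ⊓ u ∧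
    D ((x + y - u) ⊔ 0) ≤ (x + y - u) ⊔ 0 ∧
    D (x ⊓ y) ≤ x ⊓ y ∧
    D (x ⊔ y) ≤ x ⊔ y := by
  subst hu
  obtain rfl : D = twiceSq (toLex (1, 0)) := funext hD
  obtain ⟨hoplus, hodot⟩ := twiceSq_oplus_odot_le_self hx0 hxu hy0 hyu hx hy
  refine ⟨hoplus, hodot, ?_, ?_⟩
  · rcases min_choice x y with h | h <;> rw [h] <;> assumption
  · rcases max_choice x y with h | h <;> rw [h] <;> assumption
end

section
/- Let G be an additive commutative group that is torsion-free (n • x = 0 with n a positive integer implies x = 0) and such that for all nonzero x, y ∈ G there exist positive integers m, n with m • x = n • y. Then there exists an injective additive group homomorphism from G into ℚ; that is, G is isomorphic to a subgroup of the rationals. -/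
/-!
Fix a nonzero `e : G`. Commensurability says that every `x` satisfies `b • x = a • e` for some
integers `a` and `b ≠ 0`, and torsion-freeness makes the ratio `a / b ∈ ℚ` independent of the
choice of `a` and `b`. The map sending `x` to this ratio is additive, and it is injective because
a ratio `0` forces `b • x = 0`.
-/

open Function

section RatMultiple

variable {G : Type*} [AddCommGroup G]

theorem IsAddTorsionFree.of_nsmul_eq_zero
    (h : ∀ (n : ℕ) (x : G), 0 < n → n • x = 0 → x = 0) : IsAddTorsionFree G where
  nsmul_right_injective n hn a b hab :=
    sub_eq_zero.1 <| h n _ (Nat.pos_of_ne_zero hn) (by rw [smul_sub, sub_eq_zero]; exact hab)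

/-- `x = q • e`, written inside `G` without dividing. -/
def IsRatMultiple (e : G) (q : ℚ) (x : G) : Prop :=
  (q.den : ℤ) • x = q.num • e

variable {e x y : G} {q r : ℚ}

theorem isRatMultiple_zero_iff : IsRatMultiple e 0 x ↔ x = 0 := by
  simp [IsRatMultiple]

variable [IsAddTorsionFree G]

theorem zsmul_left_inj_of_ne_zero (he : e ≠ 0) {a b : ℤ} : a • e = b • e ↔ a = b := by
  rw [← sub_eq_zero, ← sub_smul, IsAddTorsionFree.zsmul_eq_zero_iff_left he, sub_eq_zero]

theorem isRatMultiple_div {a b : ℤ} (hb : b ≠ 0) (h : b • x = a • e) :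
    IsRatMultiple e (a / b) x := by
  set q : ℚ := a / b
  have hcross : q.num * b = a * q.den := by
    have hq : (q.num : ℚ) / q.den = a / b := Rat.num_div_den q
    rw [div_eq_div_iff (by positivity) (by exact_mod_cast hb)] at hq
    exact_mod_cast hq
  refine (zsmul_right_inj hb).1 ?_
  rw [smul_comm, h, smul_smul, smul_smul, mul_comm b, hcross, mul_comm]

theorem IsRatMultiple.unique (he : e ≠ 0) (hq : IsRatMultiple e q x) (hr : IsRatMultiple e r x) :
    q = r := by
  have : (r.den * q.num : ℤ) • e = (q.den * r.num : ℤ) • e := by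
    rw [mul_smul, ← hq, mul_smul, ← hr, smul_comm]
  rw [Rat.eq_iff_mul_eq_mul]
  linear_combination (zsmul_left_inj_of_ne_zero he).1 this

theorem IsRatMultiple.add (hq : IsRatMultiple e q x) (hr : IsRatMultiple e r y) :
    IsRatMultiple e (q + r) (x + y) := by
  have hsum : (q.den * r.den : ℤ) • (x + y) = (q.num * r.den + r.num * q.den) • e := by
    rw [smul_add, mul_smul, mul_smul, smul_comm (q.den : ℤ) (r.den : ℤ) x, hq, hr, smul_smul,
      smul_smul, add_smul, mul_comm (r.den : ℤ), mul_comm (q.den : ℤ)]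
  convert isRatMultiple_div (by positivity) hsum using 1
  push_cast
  conv_lhs => rw [← Rat.num_div_den q, ← Rat.num_div_den r]
  field_simp

noncomputable def ratMultipleHom (he : e ≠ 0) (h : ∀ x, ∃ q, IsRatMultiple e q x) : G →+ ℚ where
  toFun x := (h x).choose
  map_zero' := (h 0).choose_spec.unique he (isRatMultiple_zero_iff.2 rfl)
  map_add' x y := (h (x + y)).choose_spec.unique he ((h x).choose_spec.add (h y).choose_spec)

theorem ratMultipleHom_injective (he : e ≠ 0) (h : ∀ x, ∃ q, IsRatMultiple e q x) :
    Injective (ratMultipleHom he h) :=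
  (injective_iff_map_eq_zero _).2 fun x hx =>
    isRatMultiple_zero_iff.1 <| (show (h x).choose = 0 from hx) ▸ (h x).choose_spec

end RatMultiple

/-- A torsion-free abelian group in which any two nonzero elements are
commensurable embeds into `ℚ`: it is isomorphic to a subgroup of the
rationals. -/
theorem stmt_15 {G : Type*} [AddCommGroup G]
    (htf : ∀ (n : ℕ) (x : G), 0 < n → n • x = 0 → x = 0)
    (hcom : ∀ x y : G, x ≠ 0 → y ≠ 0 → ∃ m n : ℕ, 0 < m ∧ 0 < n ∧ m • x = n • y) :
    ∃ f : G →+ ℚ, Function.Injective f := by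
  have : IsAddTorsionFree G := .of_nsmul_eq_zero htf
  obtain _ | _ := subsingleton_or_nontrivial G
  · exact ⟨0, injective_of_subsingleton _⟩
  obtain ⟨e, he⟩ := exists_ne (0 : G)
  have hmul : ∀ x, ∃ q, IsRatMultiple e q x := by
    intro x
    by_cases hx : x = 0
    · exact ⟨0, isRatMultiple_zero_iff.2 hx⟩
    obtain ⟨m, n, hm, -, hmn⟩ := hcom x e hx he
    exact ⟨_, isRatMultiple_div (a := n) (b := m) (by positivity) (by simpa using hmn)⟩
  exact ⟨ratMultipleHom he hmul, ratMultipleHom_injective he hmul⟩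
end

section
/- Let X be a nonempty set and σ an action of the multiplicative monoid of positive integers on X (σ 1 y = y and σ (m·n) y = σ m (σ n y)) such that: (i) for all y, z ∈ X there exist positive integers m, n and w ∈ X with σ m w = y and σ n w = z; and (ii) for all positive integers m, n and y ∈ X, if σ m y = σ n y then there exist a positive integer p and z ∈ X with m·p = n·p and σ p z = y. Then there exists an injective function f : X → ℚ such that f x > 0 for all x ∈ X, f (σ n x) = n · f x for all positive integers n and all x, and the range of f is closed under addition (f x + f y lies in the range of f for all x, y). Hence X is isomorphic, as an ℕ×-set, to the positive part of a subgroup of ℚ. -/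
/-!
Fix a base point `x₀`. Any `x` and `x₀` have a common root, `x = σ a u` and `x₀ = σ b u`;
send `x` to `a / b`. The flatness condition makes the action cancellative
(`σ m y = σ n y → m = n`), and this makes `a / b` independent of the root: two roots have a
common root in turn, and comparing exponents over it gives the same fraction. Injectivity
and closure under addition are read off a common root `u` of `x = σ a u`, `y = σ b u` and
`x₀ = σ c u`; the sum `a / c + b / c` is the value of `σ (a + b) u`.
-/

structure IsFlatAction {X : Type*} (σ : ℕ+ → X → X) : Prop where
  map_mul : ∀ (m n : ℕ+) (y : X), σ (m * n) y = σ m (σ n y)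
  exists_common_root : ∀ y z : X, ∃ (m n : ℕ+) (w : X), σ m w = y ∧ σ n w = z
  exists_of_eq : ∀ (m n : ℕ+) (y : X), σ m y = σ n y →
    ∃ (p : ℕ+) (z : X), m * p = n * p ∧ σ p z = y

namespace IsFlatAction

variable {X : Type*} {σ : ℕ+ → X → X}

theorem eq_of_apply_eq (h : IsFlatAction σ) {m n : ℕ+} {y : X} (hy : σ m y = σ n y) :
    m = n := by
  obtain ⟨p, -, hp, -⟩ := h.exists_of_eq m n y hy
  exact mul_right_cancel hp

theorem exists_common_root₃ (h : IsFlatAction σ) (x y z : X) :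
    ∃ (a b c : ℕ+) (u : X), σ a u = x ∧ σ b u = y ∧ σ c u = z := by
  obtain ⟨a, b, v, rfl, rfl⟩ := h.exists_common_root x y
  obtain ⟨c, d, u, rfl, rfl⟩ := h.exists_common_root v z
  exact ⟨a * c, b * c, d, u, h.map_mul a c u, h.map_mul b c u, rfl⟩

theorem div_eq_div_of_apply_eq (h : IsFlatAction σ) {a b a' b' : ℕ+} {u u' : X}
    (hx : σ a u = σ a' u') (hx₀ : σ b u = σ b' u') : (a / b : ℚ) = a' / b' := by
  obtain ⟨c, d, v, rfl, rfl⟩ := h.exists_common_root u u'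
  have hac : a * c = a' * d := h.eq_of_apply_eq (by rwa [h.map_mul, h.map_mul])
  have hbc : b * c = b' * d := h.eq_of_apply_eq (by rwa [h.map_mul, h.map_mul])
  calc (a / b : ℚ) = ((a * c : ℕ+) : ℚ) / (b * c : ℕ+) := by
        push_cast; rw [mul_div_mul_right _ _ (by positivity)]
    _ = ((a' * d : ℕ+) : ℚ) / (b' * d : ℕ+) := by rw [hac, hbc]
    _ = a' / b' := by push_cast; rw [mul_div_mul_right _ _ (by positivity)]

noncomputable def ratio (h : IsFlatAction σ) (x₀ x : X) : ℚ :=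
  let root := h.exists_common_root x x₀
  (root.choose : ℚ) / root.choose_spec.choose

theorem ratio_eq_div (h : IsFlatAction σ) {x₀ x u : X} {a b : ℕ+} (hx : σ a u = x)
    (hx₀ : σ b u = x₀) : h.ratio x₀ x = a / b := by
  obtain ⟨hx', hx₀'⟩ := (h.exists_common_root x x₀).choose_spec.choose_spec.choose_spec
  exact h.div_eq_div_of_apply_eq (hx'.trans hx.symm) (hx₀'.trans hx₀.symm)

theorem ratio_pos (h : IsFlatAction σ) (x₀ x : X) : 0 < h.ratio x₀ x := by
  unfold ratio
  positivity

theorem ratio_injective (h : IsFlatAction σ) (x₀ : X) : Function.Injective (h.ratio x₀) := by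
  intro x y hxy
  obtain ⟨a, b, c, u, rfl, rfl, hc⟩ := h.exists_common_root₃ x y x₀
  rw [h.ratio_eq_div rfl hc, h.ratio_eq_div rfl hc,
    div_left_inj' (by positivity), Nat.cast_inj, PNat.coe_inj] at hxy
  rw [hxy]

theorem ratio_apply (h : IsFlatAction σ) (x₀ x : X) (n : ℕ+) :
    h.ratio x₀ (σ n x) = n * h.ratio x₀ x := by
  obtain ⟨a, b, u, rfl, hb⟩ := h.exists_common_root x x₀
  rw [h.ratio_eq_div rfl hb, ← h.map_mul, h.ratio_eq_div rfl hb, PNat.mul_coe, Nat.cast_mul,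
    mul_div_assoc]

theorem exists_ratio_eq_add (h : IsFlatAction σ) (x₀ x y : X) :
    ∃ z, h.ratio x₀ x + h.ratio x₀ y = h.ratio x₀ z := by
  obtain ⟨a, b, c, u, rfl, rfl, hc⟩ := h.exists_common_root₃ x y x₀
  refine ⟨σ (a + b) u, ?_⟩
  rw [h.ratio_eq_div rfl hc, h.ratio_eq_div rfl hc, h.ratio_eq_div rfl hc, PNat.add_coe,
    Nat.cast_add, add_div]

end IsFlatAction

theorem stmt_17_general {X : Type*} [Nonempty X] (σ : ℕ+ → X → X)
    (hmul : ∀ (m n : ℕ+) (y : X), σ (m * n) y = σ m (σ n y))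
    (hdiv : ∀ y z : X, ∃ (m n : ℕ+) (w : X), σ m w = y ∧ σ n w = z)
    (hflat : ∀ (m n : ℕ+) (y : X), σ m y = σ n y →
      ∃ (p : ℕ+) (z : X), m * p = n * p ∧ σ p z = y) :
    ∃ f : X → ℚ, Function.Injective f ∧ (∀ x : X, 0 < f x) ∧
      (∀ (n : ℕ+) (x : X), f (σ n x) = (n : ℚ) * f x) ∧
      (∀ x y : X, ∃ z : X, f x + f y = f z) := by
  obtain ⟨x₀⟩ := ‹Nonempty X›
  have h : IsFlatAction σ := ⟨hmul, hdiv, hflat⟩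
  exact ⟨h.ratio x₀, h.ratio_injective x₀, h.ratio_pos x₀,
    fun n x => h.ratio_apply x₀ x n, h.exists_ratio_eq_add x₀⟩

/-- A flat action `σ` of the multiplicative monoid of positive integers on a
nonempty set `X` is isomorphic, as an `ℕ×`-set, to the positive part of a
subgroup of `ℚ` (with the action `n · q = n * q`). -/
theorem stmt_17 {X : Type*} [Nonempty X] (σ : ℕ+ → X → X)
    (hone : ∀ y : X, σ 1 y = y)
    (hmul : ∀ (m n : ℕ+) (y : X), σ (m * n) y = σ m (σ n y))
    (hdiv : ∀ y z : X, ∃ (m n : ℕ+) (w : X), σ m w = y ∧ σ n w = z)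
    (hflat : ∀ (m n : ℕ+) (y : X), σ m y = σ n y →
      ∃ (p : ℕ+) (z : X), m * p = n * p ∧ σ p z = y) :
    ∃ f : X → ℚ, Function.Injective f ∧ (∀ x : X, 0 < f x) ∧
      (∀ (n : ℕ+) (x : X), f (σ n x) = (n : ℚ) * f x) ∧
      (∀ x y : X, ∃ z : X, f x + f y = f z) :=
  stmt_17_general σ hmul hdiv hflat
end

section
/- Let G be an additive subgroup of ℚ and let y, z ∈ G with y > 0 and z > 0. Then there exist w ∈ G with w > 0 and positive integers m, n such that m • w = y and n • w = z. Hence the Frobenius action of the positive integers on the positive part of a subgroup of the rationals satisfies the divisibility condition of flatness. -/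
/-! Write `y / z = m / n` in lowest terms and put `w = y / m = z / n`. Since `m` and `n` are
coprime, a Bézout relation `a m + b n = 1` gives `w = a • y + b • z`, so `w ∈ G`. -/

theorem AddSubgroup.mem_of_nsmul_mem_of_coprime {A : Type*} [AddGroup A] (H : AddSubgroup A)
    {w : A} {m n : ℕ} (hmn : m.Coprime n) (hm : m • w ∈ H) (hn : n • w ∈ H) : w ∈ H := by
  have bezout : (m : ℤ) * m.gcdA n + n * m.gcdB n = 1 := by
    rw [← Nat.gcd_eq_gcd_ab, hmn, Nat.cast_one]
  have hw : w = m.gcdA n • (m • w) + m.gcdB n • (n • w) := by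
    rw [← natCast_zsmul, ← natCast_zsmul, smul_smul, smul_smul, mul_comm (m.gcdA n),
      mul_comm (m.gcdB n), ← add_zsmul, bezout, one_zsmul]
  rw [hw]
  exact H.add_mem (H.zsmul_mem hm _) (H.zsmul_mem hn _)

theorem Rat.exists_coprime_nsmul_eq {y z : ℚ} (hy : 0 < y) (hz : 0 < z) :
    ∃ w : ℚ, 0 < w ∧ ∃ m n : ℕ, m.Coprime n ∧ 0 < m ∧ 0 < n ∧ m • w = y ∧ n • w = z := by
  set q := y / z
  have hq : 0 < q := div_pos hy hz
  have hmq : (q.num.natAbs : ℚ) = q * q.den := by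
    rw [Rat.mul_den_eq_num, Nat.cast_natAbs, Int.cast_abs,
      abs_of_pos (by exact_mod_cast Rat.num_pos.mpr hq)]
  have hm : (0 : ℚ) < q.num.natAbs := by rw [hmq]; exact mul_pos hq (by exact_mod_cast q.den_pos)
  refine ⟨y / q.num.natAbs, div_pos hy hm, q.num.natAbs, q.den, q.reduced, by exact_mod_cast hm,
    q.den_pos, ?_, ?_⟩
  · rw [nsmul_eq_mul]; field_simp
  · rw [nsmul_eq_mul, hmq]
    field_simp
    exact (div_mul_cancel₀ y hz.ne').symm

/-- For positive elements `y, z` of a subgroup `G` of `ℚ` there is a common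
"divisor" `w ∈ G`, `w > 0`, with `m • w = y` and `n • w = z` for some positive
integers `m, n`: the Frobenius action of `ℕ×` on the positive part of `G`
satisfies the divisibility condition of flatness. -/
theorem stmt_18 (G : AddSubgroup ℚ) (y z : ℚ) (hyG : y ∈ G) (hzG : z ∈ G)
    (hy : 0 < y) (hz : 0 < z) :
    ∃ w ∈ G, 0 < w ∧ ∃ m n : ℕ, 0 < m ∧ 0 < n ∧ m • w = y ∧ n • w = z := by
  obtain ⟨w, hw, m, n, hmn, hm, hn, rfl, rfl⟩ := Rat.exists_coprime_nsmul_eq hy hz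
  exact ⟨w, G.mem_of_nsmul_mem_of_coprime hmn hyG hzG, hw, m, n, hm, hn, rfl, rfl⟩
end
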